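/- If a tree T of size λ with no branches of size κ⁺ is not κ-special (there is no function f: T → κ injective on chains), then the comparability graph of T has size λ, chromatic number exactly κ⁺, and has no K_{κ⁺} minor. -/

import Mathlib

universe u

open Cardinal

def Colorable' {V : Type u} (G : SimpleGraph V) (μ : Cardinal.{u}) : Prop :=
  ∃ (β : Type u) (c : V → β), #β ≤ μ ∧ ∀ ⦃x y : V⦄, G.Adj x y → c x ≠ c y

def ChromaticEq {V : Type u} (G : SimpleGraph V) (μ : Cardinal.{u}) : Prop :=
  Colorable' G μ ∧ ∀ ν : Cardinal.{u}, ν < μ → ¬ Colorable' G ν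

def HasCompleteMinor {V : Type u} (G : SimpleGraph V) (κ : Cardinal.{u}) : Prop :=
  ∃ (ι : Type u) (U : ι → Set V), #ι = κ ∧
    (∀ i, (U i).Nonempty) ∧
    (∀ i j, i ≠ j → Disjoint (U i) (U j)) ∧
    (∀ i, (G.induce (U i)).Connected) ∧
    (∀ i j, i ≠ j → ∃ x ∈ U i, ∃ y ∈ U j, G.Adj x y)

def IsSetTree (T : Type u) [PartialOrder T] : Prop :=
  ∀ t : T, IsWellOrder {s : T // s < t} (· < ·)

def compGraph (T : Type u) [PartialOrder T] : SimpleGraph T :=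
  SimpleGraph.fromRel (· ≤ ·)

def IsSpecialTree (T : Type u) [PartialOrder T] (κ : Cardinal.{u}) : Prop :=
  ∃ (β : Type u) (f : T → β), #β ≤ κ ∧ ∀ ⦃s t : T⦄, s < t → f s ≠ f t

def HasChainOfSize (T : Type u) [PartialOrder T] (κ : Cardinal.{u}) : Prop :=
  ∃ C : Set T, IsChain (· ≤ ·) C ∧ #C = κ

def HasAntichainOfSize (T : Type u) [PartialOrder T] (κ : Cardinal.{u}) : Prop :=
  ∃ A : Set T, IsAntichain (· ≤ ·) A ∧ #A = κ

def HasIndepOfSize {V : Type u} (G : SimpleGraph V) (κ : Cardinal.{u}) : Prop :=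
  ∃ S : Set V, #S = κ ∧ ∀ x ∈ S, ∀ y ∈ S, ¬ G.Adj x y

def AllChainsCountable (T : Type u) [PartialOrder T] : Prop :=
  ∀ C : Set T, IsChain (· ≤ ·) C → #C ≤ ℵ₀

noncomputable def nodeHeight {T : Type u} [PartialOrder T] (hT : IsSetTree T) (t : T) : Ordinal.{u} :=
  @Ordinal.type {s : T // s < t} (· < ·) (hT t)

def KappaLambdaConnected {V : Type u} (G : SimpleGraph V) (κ μ : Cardinal.{u}) : Prop :=
  ∀ S : Set V, #S < κ → (Sᶜ : Set V).Nonempty ∧ #((G.induce (Sᶜ : Set V)).ConnectedComponent) < μ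

def KappaConnected {V : Type u} (G : SimpleGraph V) (κ : Cardinal.{u}) : Prop :=
  κ ≤ #V ∧ ∀ S : Set V, #S < κ → (G.induce (Sᶜ : Set V)).Connected

def ContainsSubdivisionOfComplete {V : Type u} (G : SimpleGraph V) (κ : Cardinal.{u}) : Prop :=
  ∃ (ι : Type u) (v : ι → V), #ι = κ ∧ Function.Injective v ∧
    ∃ p : ∀ i j : ι, G.Walk (v i) (v j),
      (∀ i j, i ≠ j → (p i j).IsPath) ∧
      (∀ i j k l, i ≠ j → k ≠ l → (i, j) ≠ (k, l) → (i, j) ≠ (l, k) →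
        ∀ x, x ∈ (p i j).support → x ∈ (p k l).support → x ∈ Set.range v) ∧
      (∀ i j k, i ≠ j → v k ∈ (p i j).support → k = i ∨ k = j)

def IsTGraph {T : Type u} [PartialOrder T] (G : SimpleGraph T) : Prop :=
  (∀ ⦃s t⦄, G.Adj s t → s < t ∨ t < s) ∧
  (∀ t s : T, s < t → ∃ r, s ≤ r ∧ r < t ∧ G.Adj r t)

/-! Every chain of `T` has size at most `κ`, so every node has height below `κ⁺`, and colouring
nodes by their height is a proper colouring with `κ⁺` colours. A proper colouring of the
comparability graph is the same as a map injective on chains, so one with `κ` colours would make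
`T` special. The branch sets of a minor are connected, hence each has a least element, and the
least elements of adjacent branch sets are comparable: a `K_{κ⁺}` minor yields a chain of size
`κ⁺`. -/

section

variable {T : Type u} [PartialOrder T]

lemma compGraph_adj {x y : T} : (compGraph T).Adj x y ↔ x ≠ y ∧ (x ≤ y ∨ y ≤ x) :=
  SimpleGraph.fromRel_adj _ x y

lemma compGraph_adj_of_lt {x y : T} (h : x < y) : (compGraph T).Adj x y :=
  compGraph_adj.mpr ⟨h.ne, .inl h.le⟩

namespace IsSetTree

lemma wellFoundedLT (hT : IsSetTree T) : WellFoundedLT T := by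
  refine ⟨⟨fun t => Acc.intro t fun s hst => ?_⟩⟩
  suffices ∀ r : {r // r < t}, Acc (· < ·) (r : T) from this ⟨s, hst⟩
  intro r
  induction r using (hT t).toIsWellFounded.wf.induction with
  | _ r ih => exact Acc.intro _ fun q hq => ih ⟨q, hq.trans r.2⟩ hq

lemma le_total_of_le (hT : IsSetTree T) {a b t : T} (ha : a ≤ t) (hb : b ≤ t) :
    a ≤ b ∨ b ≤ a := by
  rcases ha.eq_or_lt with rfl | ha
  · exact .inr hb
  rcases hb.eq_or_lt with rfl | hb
  · exact .inl ha.le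
  have := hT t
  rcases trichotomous_of (· < ·) (⟨a, ha⟩ : {s // s < t}) ⟨b, hb⟩ with h | h | h
  · exact .inl (Subtype.coe_lt_coe.mpr h).le
  · exact .inl (congrArg Subtype.val h).le
  · exact .inr (Subtype.coe_lt_coe.mpr h).le

lemma isChain_Iio (hT : IsSetTree T) (t : T) : IsChain (· ≤ ·) (Set.Iio t) :=
  fun _ ha _ hb _ => hT.le_total_of_le ha.le hb.le

lemma exists_le_le_of_walk (hT : IsSetTree T) {V : Set T} {x y : V}
    (w : ((compGraph T).induce V).Walk x y) : ∃ z ∈ V, z ≤ (x : T) ∧ z ≤ (y : T) := by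
  induction w with
  | nil => exact ⟨_, Subtype.coe_prop _, le_rfl, le_rfl⟩
  | @cons a b c hab _ ih =>
    obtain ⟨z, hzV, hzb, hzc⟩ := ih
    rcases (compGraph_adj.mp (SimpleGraph.comap_adj.mp hab)).2 with hab | hba
    · rcases hT.le_total_of_le hzb hab with hza | haz
      · exact ⟨z, hzV, hza, hzc⟩
      · exact ⟨a, a.2, le_rfl, haz.trans hzc⟩
    · exact ⟨z, hzV, hzb.trans hba, hzc⟩

/-- A connected set in the comparability graph has a common lower bound for any two of its
points, so a minimal element of it (which exists by well-foundedness) is its least element. -/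
lemma exists_isLeast_of_connected (hT : IsSetTree T) {V : Set T}
    (hV : ((compGraph T).induce V).Connected) : ∃ m, IsLeast V m := by
  have := hT.wellFoundedLT
  obtain ⟨v₀⟩ := hV.nonempty
  obtain ⟨m, hmV, hmin⟩ := wellFounded_lt.has_min V ⟨v₀, v₀.2⟩
  refine ⟨m, hmV, fun v hv => ?_⟩
  obtain ⟨z, hzV, hzm, hzv⟩ := hT.exists_le_le_of_walk (hV.preconnected ⟨m, hmV⟩ ⟨v, hv⟩).some
  have hzm : z = m := hzm.eq_of_not_lt (hmin z hzV)
  exact hzm ▸ hzv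

lemma nodeHeight_strictMono (hT : IsSetTree T) : StrictMono (nodeHeight hT) := by
  intro s t hst
  have := hT s
  have := hT t
  let f : PrincipalSeg (α := {r // r < s}) (β := {r // r < t}) (· < ·) (· < ·) :=
    { toFun := fun r => ⟨r, r.2.trans hst⟩
      inj' := fun a b hab => Subtype.ext (congrArg Subtype.val hab :)
      map_rel_iff' := Iff.rfl
      top := ⟨s, hst⟩
      mem_range_iff_rel' := fun r => ⟨by rintro ⟨a, rfl⟩; exact a.2, fun hr => ⟨⟨r, hr⟩, rfl⟩⟩ }
  exact f.ordinal_type_lt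

lemma card_nodeHeight (hT : IsSetTree T) (t : T) : (nodeHeight hT t).card = #(Set.Iio t) :=
  @Ordinal.card_type _ _ (hT t)

lemma colorable'_compGraph {κ : Cardinal.{u}} (hT : IsSetTree T)
    (hchain : ∀ C : Set T, IsChain (· ≤ ·) C → #C ≤ κ) :
    Colorable' (compGraph T) (Order.succ κ) := by
  have hheight (t : T) : nodeHeight hT t < (Order.succ κ).ord := by
    rw [Cardinal.lt_ord, hT.card_nodeHeight]
    exact Order.lt_succ_of_le (hchain _ (hT.isChain_Iio t))
  refine ⟨(Order.succ κ).ord.ToType, fun t => Ordinal.ToType.mk ⟨nodeHeight hT t, hheight t⟩,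
    (Cardinal.mk_ord_toType _).le, fun x y hxy hc => ?_⟩
  have hxy' : nodeHeight hT x = nodeHeight hT y :=
    congrArg Subtype.val (Ordinal.ToType.mk.injective hc)
  obtain ⟨hne, hle | hle⟩ := compGraph_adj.mp hxy
  · exact (hT.nodeHeight_strictMono (hle.lt_of_ne hne)).ne hxy'
  · exact (hT.nodeHeight_strictMono (hle.lt_of_ne hne.symm)).ne' hxy'

lemma hasChainOfSize_of_hasCompleteMinor {μ : Cardinal.{u}} (hT : IsSetTree T)
    (h : HasCompleteMinor (compGraph T) μ) : HasChainOfSize T μ := by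
  obtain ⟨ι, U, hcard, -, hdisj, hconn, hadj⟩ := h
  choose m hm using fun i => hT.exists_isLeast_of_connected (hconn i)
  have hinj : Function.Injective m := fun i j hij => by
    by_contra hne
    exact (hdisj i j hne).ne_of_mem (hm i).1 (hm j).1 hij
  refine ⟨Set.range m, ?_, by rw [Cardinal.mk_range_eq _ hinj, hcard]⟩
  rintro _ ⟨i, rfl⟩ _ ⟨j, rfl⟩ hij
  obtain ⟨x, hx, y, hy, hxy⟩ := hadj i j (ne_of_apply_ne m hij)
  rcases (compGraph_adj.mp hxy).2 with h | h
  · exact hT.le_total_of_le (((hm i).2 hx).trans h) ((hm j).2 hy)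
  · exact hT.le_total_of_le ((hm i).2 hx) (((hm j).2 hy).trans h)

end IsSetTree

lemma mk_le_of_isChain_of_not_hasChainOfSize {κ : Cardinal.{u}}
    (h : ¬ HasChainOfSize T (Order.succ κ)) {C : Set T} (hC : IsChain (· ≤ ·) C) : #C ≤ κ := by
  by_contra! hlt
  obtain ⟨D, hD⟩ := Cardinal.le_mk_iff_exists_set.mp (Order.succ_le_of_lt hlt)
  exact h ⟨Subtype.val '' D, hC.mono (Subtype.coe_image_subset C D),
    by rw [Cardinal.mk_image_eq Subtype.val_injective, hD]⟩

lemma isSpecialTree_of_colorable' {μ : Cardinal.{u}} (h : Colorable' (compGraph T) μ) :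
    IsSpecialTree T μ :=
  let ⟨β, c, hβ, hc⟩ := h
  ⟨β, c, hβ, fun _ _ hst => hc (compGraph_adj_of_lt hst)⟩

end

lemma Colorable'.mono {V : Type u} {G : SimpleGraph V} {μ ν : Cardinal.{u}} (hμν : μ ≤ ν)
    (h : Colorable' G μ) : Colorable' G ν :=
  let ⟨β, c, hβ, hc⟩ := h
  ⟨β, c, hβ.trans hμν, hc⟩

theorem stmt4_general (κ lam : Cardinal.{u})
    (T : Type u) [PartialOrder T] (hT : IsSetTree T)
    (hsize : #T = lam)
    (hbranch : ¬ HasChainOfSize T (Order.succ κ))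
    (hns : ¬ IsSpecialTree T κ) :
    #T = lam ∧ ChromaticEq (compGraph T) (Order.succ κ) ∧
      ¬ HasCompleteMinor (compGraph T) (Order.succ κ) :=
  ⟨hsize,
    ⟨hT.colorable'_compGraph fun _ => mk_le_of_isChain_of_not_hasChainOfSize hbranch,
      fun _ hν hcol => hns (isSpecialTree_of_colorable' (hcol.mono (Order.lt_succ_iff.mp hν)))⟩,
    fun hminor => hbranch (hT.hasChainOfSize_of_hasCompleteMinor hminor)⟩

/-- if a tree of size λ with no branches of size κ⁺ is not κ-special,
then its comparability graph has size λ, chromatic number exactly κ⁺ and no K_{κ⁺} minor. -/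
theorem stmt4 (κ lam : Cardinal.{u}) (hκ : ℵ₀ ≤ κ)
    (T : Type u) [PartialOrder T] (hT : IsSetTree T)
    (hsize : #T = lam)
    (hbranch : ¬ HasChainOfSize T (Order.succ κ))
    (hns : ¬ IsSpecialTree T κ) :
    #T = lam ∧ ChromaticEq (compGraph T) (Order.succ κ) ∧
      ¬ HasCompleteMinor (compGraph T) (Order.succ κ) :=
  stmt4_general κ lam T hT hsize hbranch hns
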